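/- Let $\Sigma$ have the spectral form $\Sigma = \sum_{i=1}^m \lambda_i P_{:,i} P_{:,i}^\top + \lambda_c \sum_{j=1}^{d-m} Q_{:,j} Q_{:,j}^\top$ with $\{P_{:,1}, \dots, P_{:,m}, Q_{:,1}, \dots, Q_{:,d-m}\}$ an orthonormal basis of $\mathbb{R}^d$, all $\lambda_i, \lambda_c > 0$. For $k > 1$ and $\epsilon \in \mathbb{R}$, define the rotated eigenvectors $\tilde P_{:,1} = -\sin\epsilon \cdot P_{:,k} + \cos\epsilon \cdot P_{:,1}$ and $\tilde P_{:,k} = \cos\epsilon \cdot P_{:,k} + \sin\epsilon \cdot P_{:,1}$, and the perturbed matrix $\tilde\Sigma_{(k)}$ obtained from $\Sigma$ by replacing $P_{:,1}$ with $\tilde P_{:,1}$ and $P_{:,k}$ with $\tilde P_{:,k}$. Then for any $z \in \mathbb{R}^d$, $\|\tilde\Sigma_{(k)}^{-1} z - \Sigma^{-1} z\|^2 = \left(\frac{1}{\lambda_1} - \frac{1}{\lambda_k}\right)^2 \sin^2\epsilon \left(\langle z, P_{:,k}\rangle^2 + \langle z, P_{:,1}\rangle^2\right)$. -/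

import Mathlib

/-!
Both `Σ` and `Σ̃` have the form `∑ μᵢ bᵢ bᵢᵀ` for an orthonormal basis `b` (the `Pᵢ` followed by
the `Qⱼ`), so their inverses are obtained by inverting the weights. A rotation in the plane of
`P₀, P_k` preserves `P₀P₀ᵀ + P_kP_kᵀ`, hence `Σ̃⁻¹ - Σ⁻¹ = (1/λ₀ - 1/λ_k) (P̃₀P̃₀ᵀ - P₀P₀ᵀ)`, and the
squared norm of this rank-two matrix applied to `z` is computed in the orthonormal pair `P₀, P_k`.
-/

open Matrix

-- `n → ℝ` carries no inner product space instance, so orthonormality is stated with `⬝ᵥ`.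
def DotOrthonormal {n ι : Type*} [Fintype n] [DecidableEq ι] (b : ι → n → ℝ) : Prop :=
  ∀ i j, b i ⬝ᵥ b j = if i = j then 1 else 0

def spectralMatrix {n ι : Type*} [Fintype ι] (μ : ι → ℝ) (b : ι → n → ℝ) : Matrix n n ℝ :=
  ∑ i, μ i • vecMulVec (b i) (b i)

section Spectral

variable {n ι κ : Type*}

theorem spectralMatrix_sumElim [Fintype ι] [Fintype κ] (μ : ι ⊕ κ → ℝ) (b : ι → n → ℝ)
    (c : κ → n → ℝ) :
    spectralMatrix μ (Sum.elim b c) =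
      spectralMatrix (μ ∘ Sum.inl) b + spectralMatrix (μ ∘ Sum.inr) c :=
  Fintype.sum_sum_type _

variable [Fintype n]

theorem DotOrthonormal.sumElim [DecidableEq ι] [DecidableEq κ] {b : ι → n → ℝ} {c : κ → n → ℝ}
    (hb : DotOrthonormal b) (hc : DotOrthonormal c) (hbc : ∀ i j, b i ⬝ᵥ c j = 0) :
    DotOrthonormal (Sum.elim b c) := by
  rintro (i | i) (j | j) <;> simp [hb _ _, hc _ _, hbc, dotProduct_comm (c _) (b _)]

variable [Fintype ι] [DecidableEq n]

theorem spectralMatrix_one_eq_one {b : ι → n → ℝ} (hb : ∀ z, ∑ i, (z ⬝ᵥ b i) • b i = z) :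
    spectralMatrix 1 b = 1 :=
  ext_iff_mulVec.2 fun z => by
    simp [spectralMatrix, sum_mulVec, vecMulVec_mulVec, dotProduct_comm _ z, hb]

variable [DecidableEq ι]

theorem spectralMatrix_mul_spectralMatrix {b : ι → n → ℝ} (hb : DotOrthonormal b) (μ ν : ι → ℝ) :
    spectralMatrix μ b * spectralMatrix ν b = spectralMatrix (μ * ν) b := by
  simp only [spectralMatrix, Finset.sum_mul, Finset.mul_sum, smul_mul_smul_comm,
    vecMulVec_mul_vecMulVec, hb _ _, ite_smul, one_smul, zero_smul, apply_ite (vecMulVec _),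
    vecMulVec_zero, smul_ite, smul_zero, Finset.sum_ite_eq', Finset.mem_univ, if_true,
    Pi.mul_apply]

theorem inv_spectralMatrix {b : ι → n → ℝ} (hb : DotOrthonormal b)
    (hcomplete : spectralMatrix 1 b = 1) {μ : ι → ℝ} (hμ : ∀ i, μ i ≠ 0) :
    (spectralMatrix μ b)⁻¹ = spectralMatrix μ⁻¹ b := by
  refine inv_eq_right_inv ?_
  rw [spectralMatrix_mul_spectralMatrix hb, ← hcomplete]
  congr 1
  exact funext fun i => mul_inv_cancel₀ (hμ i)

end Spectral

section PlaneRotation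

variable {n ι : Type*} [DecidableEq ι]

def planeRotation (b : ι → n → ℝ) (i j : ι) (c s : ℝ) : ι → n → ℝ :=
  Function.update (Function.update b i ((-s) • b j + c • b i)) j (c • b j + s • b i)

theorem planeRotation_dotProduct_eq_zero [Fintype n] {b : ι → n → ℝ} {w : n → ℝ}
    (h : ∀ l, b l ⬝ᵥ w = 0) (i j : ι) (c s : ℝ) (l : ι) :
    planeRotation b i j c s l ⬝ᵥ w = 0 := by
  simp only [planeRotation, Function.update_apply]
  split_ifs <;> simp [h]

theorem DotOrthonormal.planeRotation [Fintype n] {b : ι → n → ℝ} (hb : DotOrthonormal b)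
    {i j : ι} (hij : i ≠ j) {c s : ℝ} (hcs : s ^ 2 + c ^ 2 = 1) :
    DotOrthonormal (planeRotation b i j c s) := by
  intro p q
  simp only [_root_.planeRotation, Function.update_apply]
  split_ifs <;> subst_vars <;> simp_all [hb _ _, Ne.symm] <;> linarith

theorem vecMulVec_rotation_add_vecMulVec_rotation (u v : n → ℝ) {c s : ℝ}
    (hcs : s ^ 2 + c ^ 2 = 1) :
    vecMulVec ((-s) • v + c • u) ((-s) • v + c • u) + vecMulVec (c • v + s • u) (c • v + s • u) =
      vecMulVec u u + vecMulVec v v := by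
  ext p q
  simp only [Matrix.add_apply, vecMulVec_apply, Pi.add_apply, Pi.smul_apply, smul_eq_mul]
  linear_combination (u p * u q + v p * v q) * hcs

variable [Fintype ι]

theorem spectralMatrix_update (μ : ι → ℝ) (b : ι → n → ℝ) (i : ι) (x : n → ℝ) :
    spectralMatrix μ (Function.update b i x) =
      spectralMatrix μ b + μ i • (vecMulVec x x - vecMulVec (b i) (b i)) := by
  rw [← sub_eq_iff_eq_add', spectralMatrix, spectralMatrix, ← Finset.sum_sub_distrib,
    Finset.sum_eq_single i (fun l _ hl => by simp [Function.update_of_ne hl]) (by simp),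
    Function.update_self, smul_sub]

theorem spectralMatrix_planeRotation (μ : ι → ℝ) (b : ι → n → ℝ) {i j : ι} (hij : i ≠ j)
    {c s : ℝ} (hcs : s ^ 2 + c ^ 2 = 1) :
    spectralMatrix μ (planeRotation b i j c s) =
      spectralMatrix μ b + (μ i - μ j) •
        (vecMulVec ((-s) • b j + c • b i) ((-s) • b j + c • b i) - vecMulVec (b i) (b i)) := by
  rw [planeRotation, spectralMatrix_update, spectralMatrix_update,
    Function.update_of_ne hij.symm]
  linear_combination (norm := module)
    μ j • vecMulVec_rotation_add_vecMulVec_rotation (b i) (b j) hcs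

end PlaneRotation

theorem sub_vecMulVec_rotation_mulVec_dotProduct_self {n : Type*} [Fintype n] {u v : n → ℝ}
    (hu : u ⬝ᵥ u = 1) (hv : v ⬝ᵥ v = 1) (huv : u ⬝ᵥ v = 0) {c s : ℝ} (hcs : s ^ 2 + c ^ 2 = 1)
    (z : n → ℝ) :
    let w := (vecMulVec ((-s) • v + c • u) ((-s) • v + c • u) - vecMulVec u u) *ᵥ z
    w ⬝ᵥ w = s ^ 2 * ((z ⬝ᵥ v) ^ 2 + (z ⬝ᵥ u) ^ 2) := by
  intro w
  simp only [w, sub_mulVec, vecMulVec_mulVec, op_smul_eq_smul, dotProduct_sub, sub_dotProduct,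
    dotProduct_add, add_dotProduct, smul_dotProduct, dotProduct_smul, smul_eq_mul, hu, hv, huv,
    dotProduct_comm v u, dotProduct_comm _ z]
  linear_combination ((-s * (z ⬝ᵥ v) + c * (z ⬝ᵥ u)) ^ 2 - (z ⬝ᵥ u) ^ 2) * hcs

theorem stmt_6 {d m dm : ℕ} [NeZero m]
    (P : Fin m → (Fin d → ℝ)) (Q : Fin dm → (Fin d → ℝ))
    (hPP : ∀ i j, P i ⬝ᵥ P j = if i = j then 1 else 0)
    (hQQ : ∀ i j, Q i ⬝ᵥ Q j = if i = j then 1 else 0)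
    (hPQ : ∀ i j, P i ⬝ᵥ Q j = 0)
    (hbasis : ∀ z : Fin d → ℝ,
      (∑ i, (z ⬝ᵥ P i) • P i) + (∑ j, (z ⬝ᵥ Q j) • Q j) = z)
    (lam : Fin m → ℝ) (hlam : ∀ i, 0 < lam i) (lamc : ℝ) (hlamc : 0 < lamc)
    (k : Fin m) (hk : k ≠ 0) (ε : ℝ)
    (Ptilde : Fin m → (Fin d → ℝ))
    (hPt : Ptilde = Function.update
      (Function.update P 0 ((-Real.sin ε) • P k + Real.cos ε • P 0)) k
      (Real.cos ε • P k + Real.sin ε • P 0))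
    (S St : Matrix (Fin d) (Fin d) ℝ)
    (hS : S = (∑ i, lam i • vecMulVec (P i) (P i)) +
      lamc • ∑ j, vecMulVec (Q j) (Q j))
    (hSt : St = (∑ i, lam i • vecMulVec (Ptilde i) (Ptilde i)) +
      lamc • ∑ j, vecMulVec (Q j) (Q j))
    (z : Fin d → ℝ) :
    (St⁻¹.mulVec z - S⁻¹.mulVec z) ⬝ᵥ (St⁻¹.mulVec z - S⁻¹.mulVec z) =
      (1 / lam 0 - 1 / lam k) ^ 2 * Real.sin ε ^ 2 *
        ((z ⬝ᵥ P k) ^ 2 + (z ⬝ᵥ P 0) ^ 2) := by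
  set c := Real.cos ε
  set s := Real.sin ε
  have hcs : s ^ 2 + c ^ 2 = 1 := Real.sin_sq_add_cos_sq ε
  have hk0 : (0 : Fin m) ≠ k := hk.symm
  replace hPt : Ptilde = planeRotation P 0 k c s := hPt
  set μ : Fin m ⊕ Fin dm → ℝ := Sum.elim lam fun _ => lamc
  have hμ : ∀ i, μ i ≠ 0 := by
    rintro (i | j)
    exacts [(hlam i).ne', hlamc.ne']
  have hspectral : ∀ R : Fin m → Fin d → ℝ, (∑ i, lam i • vecMulVec (R i) (R i)) +
      lamc • ∑ j, vecMulVec (Q j) (Q j) = spectralMatrix μ (Sum.elim R Q) := fun R => by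
    rw [spectralMatrix_sumElim]
    simp [spectralMatrix, μ, Finset.smul_sum]
  have hP : DotOrthonormal P := hPP
  have hb : DotOrthonormal (Sum.elim P Q) := hP.sumElim hQQ hPQ
  have hb' : DotOrthonormal (Sum.elim Ptilde Q) := hPt ▸ (hP.planeRotation hk0 hcs).sumElim
    hQQ fun i j => planeRotation_dotProduct_eq_zero (hPQ · j) 0 k c s i
  have hcomplete : spectralMatrix 1 (Sum.elim P Q) = 1 :=
    spectralMatrix_one_eq_one fun z => by rw [Fintype.sum_sum_type]; exact hbasis z
  have hcomplete' : spectralMatrix 1 (Sum.elim Ptilde Q) = 1 := by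
    rw [← hcomplete, spectralMatrix_sumElim, spectralMatrix_sumElim, hPt,
      spectralMatrix_planeRotation _ _ hk0 hcs]
    simp
  have hdiff : St⁻¹ - S⁻¹ = ((lam 0)⁻¹ - (lam k)⁻¹) •
      (vecMulVec ((-s) • P k + c • P 0) ((-s) • P k + c • P 0) - vecMulVec (P 0) (P 0)) := by
    rw [hS, hSt, hspectral, hspectral, inv_spectralMatrix hb hcomplete hμ,
      inv_spectralMatrix hb' hcomplete' hμ, spectralMatrix_sumElim, spectralMatrix_sumElim, hPt,
      spectralMatrix_planeRotation _ _ hk0 hcs]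
    simp [μ]
  rw [← sub_mulVec, hdiff, smul_mulVec, dotProduct_smul, smul_dotProduct,
    sub_vecMulVec_rotation_mulVec_dotProduct_self (by simpa using hPP 0 0)
      (by simpa using hPP k k) (by simpa [hk0] using hPP 0 k) hcs]
  simp only [one_div, smul_eq_mul]
  ring
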